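/- If p = α(T) = δ(T) < ∞ for a bounded linear operator T on a Banach space X, then (N(T^p), R(T^p)) is the unique reducing pair (V, W) of closed T-invariant subspaces with X = V ⊕ W, T nilpotent on V, and T invertible on W. -/

import Mathlib

/-! If `T` is nilpotent on `V` and bijective on `W`, then for every large `N` the power `T ^ N`
kills `V` and maps `W` bijectively onto itself; since `X = V ⊕ W` this forces
`ker (T ^ N) = V` and `range (T ^ N) = W`. Finite ascent and descent `p` make kernels and ranges
of the powers constant from `p` on, so `ker (T ^ N) = ker (T ^ p)` and `range (T ^ N) = range (T ^ p)`. -/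

open LinearMap Submodule

theorem LinearMap.ker_eq_of_isCompl {R M N : Type*} [Ring R] [AddCommGroup M] [Module R M]
    [AddCommGroup N] [Module R N] {g : M →ₗ[R] N}
    {V W : Submodule R M} (hVW : IsCompl V W) (hV : V ≤ ker g) (hW : Set.InjOn g W) :
    ker g = V := by
  have hdisj : W ⊓ ker g = ⊥ := by
    refine disjoint_iff.mp (Submodule.disjoint_def.mpr fun x hxW hxker ↦ ?_)
    exact hW hxW W.zero_mem (by rw [mem_ker.mp hxker, map_zero])
  rw [← top_inf_eq (ker g), ← hVW.sup_eq_top, sup_inf_assoc_of_le W hV, hdisj, sup_bot_eq]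

namespace Module.End

variable {R M : Type*}

theorem range_pow_constant [Semiring R] [AddCommMonoid M] [Module R M] {f : End R M} {k : ℕ}
    (h : range (f ^ k) = range (f ^ (k + 1))) : ∀ m, range (f ^ k) = range (f ^ (k + m))
  | 0 => rfl
  | m + 1 =>
    calc range (f ^ k) = range (f ^ (k + m)) := range_pow_constant h m
      _ = map (f ^ m) (range (f ^ k)) := by rw [← range_comp, ← mul_eq_comp, ← pow_add, add_comm]
      _ = map (f ^ m) (range (f ^ (k + 1))) := by rw [h]
      _ = range (f ^ (k + (m + 1))) := by
        rw [← range_comp, ← mul_eq_comp, ← pow_add, add_comm m, ← add_assoc, add_right_comm]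

theorem range_eq_of_isCompl [Semiring R] [AddCommMonoid M] [Module R M] {g : End R M}
    {V W : Submodule R M} (hVW : IsCompl V W) (hV : V ≤ ker g) (hW : g '' W = W) :
    range g = W := by
  have hmapW : map g W = W := SetLike.coe_injective (by rw [map_coe, hW])
  rw [range_eq_map, ← hVW.sup_eq_top, Submodule.map_sup, le_ker_iff_map.mp hV, hmapW, bot_sup_eq]

end Module.End

theorem reducing_pair_unique_general {X : Type*} [NormedAddCommGroup X]
    [NormedSpace ℝ X] (T : X →L[ℝ] X) (p : ℕ)
    (hascEq : LinearMap.ker ((T ^ p : X →L[ℝ] X) : X →ₗ[ℝ] X) = LinearMap.ker ((T ^ (p + 1) : X →L[ℝ] X) : X →ₗ[ℝ] X))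
    (hdesEq : LinearMap.range ((T ^ p : X →L[ℝ] X) : X →ₗ[ℝ] X) = LinearMap.range ((T ^ (p + 1) : X →L[ℝ] X) : X →ₗ[ℝ] X)) :
    ∀ V W : Submodule ℝ X, IsClosed (V : Set X) → IsClosed (W : Set X) → IsCompl V W →
      (∀ x ∈ V, T x ∈ V) → (∀ x ∈ W, T x ∈ W) →
      (∃ n : ℕ, ∀ x ∈ V, (T ^ n) x = 0) →
      Set.BijOn T (W : Set X) (W : Set X) →
      V = LinearMap.ker ((T ^ p : X →L[ℝ] X) : X →ₗ[ℝ] X) ∧ W = LinearMap.range ((T ^ p : X →L[ℝ] X) : X →ₗ[ℝ] X) := by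
  intro V W _ _ hVW _ _ ⟨n, hn⟩ hbij
  simp only [ContinuousLinearMap.toLinearMap_pow] at hascEq hdesEq ⊢
  set f : Module.End ℝ X := (T : X →ₗ[ℝ] X)
  have hV : V ≤ ker (f ^ (p + n)) := fun x hx ↦ by
    have hfn : (f ^ n) x = 0 := by
      rw [← ContinuousLinearMap.toLinearMap_pow, ContinuousLinearMap.coe_coe, hn x hx]
    rw [mem_ker, pow_add, Module.End.mul_apply, hfn, map_zero]
  have hW : Set.BijOn ⇑(f ^ (p + n)) W W := by
    rw [Module.End.coe_pow]
    exact hbij.iterate _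
  rw [Module.End.ker_pow_constant hascEq n, Module.End.range_pow_constant hdesEq n]
  exact ⟨(LinearMap.ker_eq_of_isCompl hVW hV hW.injOn).symm,
    (Module.End.range_eq_of_isCompl hVW hV hW.image_eq).symm⟩

/-- If `p = α(T) = δ(T) < ∞`, then `(N(T^p), R(T^p))` is the unique reducing pair of closed
invariant subspaces on which `T` is nilpotent resp. invertible. -/
theorem reducing_pair_unique {X : Type*} [NormedAddCommGroup X]
    [NormedSpace ℝ X] [CompleteSpace X] (T : X →L[ℝ] X) (p : ℕ)
    (hascEq : LinearMap.ker ((T ^ p : X →L[ℝ] X) : X →ₗ[ℝ] X) = LinearMap.ker ((T ^ (p + 1) : X →L[ℝ] X) : X →ₗ[ℝ] X))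
    (hascMin : ∀ j : ℕ, j < p → LinearMap.ker ((T ^ j : X →L[ℝ] X) : X →ₗ[ℝ] X) ≠ LinearMap.ker ((T ^ (j + 1) : X →L[ℝ] X) : X →ₗ[ℝ] X))
    (hdesEq : LinearMap.range ((T ^ p : X →L[ℝ] X) : X →ₗ[ℝ] X) = LinearMap.range ((T ^ (p + 1) : X →L[ℝ] X) : X →ₗ[ℝ] X))
    (hdesMin : ∀ j : ℕ, j < p → LinearMap.range ((T ^ j : X →L[ℝ] X) : X →ₗ[ℝ] X) ≠ LinearMap.range ((T ^ (j + 1) : X →L[ℝ] X) : X →ₗ[ℝ] X)) :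
    ∀ V W : Submodule ℝ X, IsClosed (V : Set X) → IsClosed (W : Set X) → IsCompl V W →
      (∀ x ∈ V, T x ∈ V) → (∀ x ∈ W, T x ∈ W) →
      (∃ n : ℕ, ∀ x ∈ V, (T ^ n) x = 0) →
      Set.BijOn T (W : Set X) (W : Set X) →
      V = LinearMap.ker ((T ^ p : X →L[ℝ] X) : X →ₗ[ℝ] X) ∧ W = LinearMap.range ((T ^ p : X →L[ℝ] X) : X →ₗ[ℝ] X) :=
  reducing_pair_unique_general T p hascEq hdesEq
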